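/- arXiv:1607.04467 — 3 statements merged into one kernel-verified Lean document; each statement's English description precedes it below -/
import Mathlib

section
/- For any positive definite real symmetric d×d matrix Q (d ≥ 2), the minimum of the quadratic form x ↦ xᵀQx over nonzero integer vectors satisfies M_d(Q) ≤ (4/3)^((d-1)/2) · (det Q)^(1/d). -/
/-!
Hermite's induction on the dimension, in the form `M_d(Q)^d ≤ (4/3)^(d choose 2) det Q`.
Let `m = M_d(Q)` and let `a` be any nonzero integer vector. Writing `a = c • b₀` with `b₀` the
first vector of a basis of `ℤ^d` (Smith normal form of `ℤ a`), the change to that basis keeps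
`M_d` and `det` and gives a form whose corner `q` satisfies `m ≤ q ≤ Q[a]`. Completing the
square, `Q[x] = q (x₀ + ℓ(x'))² + R[x']` with `R` the Schur complement of the corner, and
`det R = det Q / q`. Rounding `x₀` to the integer nearest `-ℓ(x')` gives
`m ≤ q / 4 + M_{d-1}(R)`, and the induction hypothesis bounds `M_{d-1}(R)` by
`((4/3)^(d-1 choose 2) det Q / m)^(1/(d-1))`. This bound does not depend on `a`, so the
infimum over `a` gives `3m/4 ≤ ((4/3)^(d-1 choose 2) det Q / m)^(1/(d-1))`, which rearranges
to the claim.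
-/

open Matrix

/-- `Md d Q` is the minimum of the quadratic form `x ↦ xᵀ Q x` over nonzero
integer vectors (expressed as an infimum, which is attained when `Q` is
positive definite). -/
noncomputable def Md (d : ℕ) (Q : Matrix (Fin d) (Fin d) ℝ) : ℝ :=
  sInf {r : ℝ | ∃ a : Fin d → ℤ, a ≠ 0 ∧
    r = (fun i => (a i : ℝ)) ⬝ᵥ Q *ᵥ (fun i => (a i : ℝ))}

lemma Module.Basis.exists_eq_smul_basis {R M ι : Type*} [CommRing R] [IsDomain R]
    [IsPrincipalIdealRing R] [AddCommGroup M] [Module R M] [Finite ι]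
    (b : Module.Basis ι R M) {a : M} (ha : a ≠ 0) (i : ι) :
    ∃ (b' : Module.Basis ι R M) (c : R), a = c • b' i := by
  classical
  have : Module.Free R M := .of_basis b
  obtain ⟨n, snf⟩ := (R ∙ a).smithNormalForm b
  obtain rfl : n = 1 := by
    have := finrank_span_eq_card (R := R) (b := fun _ : Fin 1 => a) (by simpa using ha)
    rw [Set.range_const, Fintype.card_fin, Module.finrank_eq_card_basis snf.bN] at this
    simpa using this
  have ha' : (⟨a, Submodule.mem_span_singleton_self a⟩ : R ∙ a) =
      snf.bN.repr ⟨a, Submodule.mem_span_singleton_self a⟩ 0 • snf.bN 0 := by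
    conv_lhs => rw [← snf.bN.sum_repr ⟨a, Submodule.mem_span_singleton_self a⟩]
    simp
  refine ⟨snf.bM.reindex (Equiv.swap i (snf.f 0)),
    snf.bN.repr ⟨a, Submodule.mem_span_singleton_self a⟩ 0 * snf.a 0, ?_⟩
  have := congrArg Subtype.val ha'
  simp only [SetLike.val_smul, snf.snf] at this
  rw [Module.Basis.reindex_apply, Equiv.symm_swap, Equiv.swap_apply_left, mul_smul]
  exact this

lemma Md_zero (Q : Matrix (Fin 0) (Fin 0) ℝ) : Md 0 Q = 0 := by
  rw [Md, ← Real.sInf_empty]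
  congr 1
  ext r
  simp

section Minimum

variable {d : ℕ} {Q : Matrix (Fin d) (Fin d) ℝ}

lemma Md_nonneg (hQ : Q.PosSemidef) : 0 ≤ Md d Q :=
  Real.sInf_nonneg <| by rintro _ ⟨a, -, rfl⟩; simpa using hQ.dotProduct_mulVec_nonneg _

lemma Md_le (hQ : Q.PosSemidef) {a : Fin d → ℤ} (ha : a ≠ 0) :
    Md d Q ≤ (fun i => (a i : ℝ)) ⬝ᵥ Q *ᵥ (fun i => (a i : ℝ)) :=
  csInf_le ⟨0, by rintro _ ⟨b, -, rfl⟩; simpa using hQ.dotProduct_mulVec_nonneg _⟩ ⟨a, ha, rfl⟩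

lemma Md_le_diag (hQ : Q.PosSemidef) (i : Fin d) : Md d Q ≤ Q i i := by
  have hcast : (fun j => ((Pi.single i 1 : Fin d → ℤ) j : ℝ)) = Pi.single i 1 := by
    ext j; by_cases h : j = i <;> simp [h]
  simpa [hcast] using Md_le hQ (a := Pi.single i 1) (by simp)

lemma le_Md [NeZero d] {r : ℝ}
    (h : ∀ a : Fin d → ℤ, a ≠ 0 → r ≤ (fun i => (a i : ℝ)) ⬝ᵥ Q *ᵥ (fun i => (a i : ℝ))) :
    r ≤ Md d Q :=
  le_csInf ⟨_, Pi.single 0 1, by simp, rfl⟩ (by rintro _ ⟨a, ha, rfl⟩; exact h a ha)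

end Minimum

section IntegralChangeOfBasis

variable {d n : ℕ}

lemma dotProduct_transpose_mul_mul_mulVec (Q V : Matrix (Fin d) (Fin d) ℝ) (x : Fin d → ℝ) :
    x ⬝ᵥ (Vᵀ * Q * V) *ᵥ x = (V *ᵥ x) ⬝ᵥ Q *ᵥ (V *ᵥ x) := by
  rw [← mulVec_mulVec, ← mulVec_mulVec, dotProduct_mulVec, vecMul_transpose]

lemma isUnit_map_intCast {U : Matrix (Fin d) (Fin d) ℤ} (hU : IsUnit U.det) :
    IsUnit (U.map (Int.cast : ℤ → ℝ)) :=
  ((isUnit_iff_isUnit_det U).mpr hU).map (Int.castRingHom ℝ).mapMatrix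

lemma det_transpose_mul_mul_map_intCast (Q : Matrix (Fin d) (Fin d) ℝ)
    {U : Matrix (Fin d) (Fin d) ℤ} (hU : IsUnit U.det) :
    ((U.map (Int.cast : ℤ → ℝ))ᵀ * Q * U.map (Int.cast : ℤ → ℝ)).det = Q.det := by
  have hdet : (U.map (Int.cast : ℤ → ℝ)).det = U.det := ((Int.castRingHom ℝ).map_det U).symm
  rw [det_mul, det_mul, det_transpose, hdet, mul_right_comm, ← Int.cast_mul,
    Int.isUnit_mul_self hU, Int.cast_one, one_mul]

lemma Matrix.PosDef.transpose_mul_mul_map_intCast {Q : Matrix (Fin d) (Fin d) ℝ} (hQ : Q.PosDef)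
    {U : Matrix (Fin d) (Fin d) ℤ} (hU : IsUnit U.det) :
    ((U.map (Int.cast : ℤ → ℝ))ᵀ * Q * U.map (Int.cast : ℤ → ℝ)).PosDef := by
  simpa using hQ.conjTranspose_mul_mul_same (mulVec_injective_of_isUnit (isUnit_map_intCast hU))

lemma Md_transpose_mul_mul_map_intCast (Q : Matrix (Fin d) (Fin d) ℝ)
    {U : Matrix (Fin d) (Fin d) ℤ} (hU : IsUnit U.det) :
    Md d ((U.map (Int.cast : ℤ → ℝ))ᵀ * Q * U.map (Int.cast : ℤ → ℝ)) = Md d Q := by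
  have hcast (a : Fin d → ℤ) :
      U.map (Int.cast : ℤ → ℝ) *ᵥ (fun i => (a i : ℝ)) = fun i => ((U *ᵥ a) i : ℝ) := by
    ext i; simp [mulVec, dotProduct]
  have hU' := (isUnit_iff_isUnit_det U).mpr hU
  have hinj : Function.Injective U.mulVec := mulVec_injective_of_isUnit hU'
  unfold Md
  congr 1
  ext r
  simp only [Set.mem_ofPred_eq, dotProduct_transpose_mul_mul_mulVec, hcast]
  constructor
  · rintro ⟨a, ha, rfl⟩
    exact ⟨U *ᵥ a, fun h => ha (hinj (h.trans (mulVec_zero U).symm)), rfl⟩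
  · rintro ⟨b, hb, rfl⟩
    obtain ⟨a, rfl⟩ := mulVec_surjective_iff_isUnit.mpr hU' b
    exact ⟨a, by rintro rfl; simp at hb, rfl⟩

lemma exists_isUnit_det_transpose_mul_mul_apply_zero_le {Q : Matrix (Fin (n+1)) (Fin (n+1)) ℝ}
    (hQ : Q.PosSemidef) {a : Fin (n+1) → ℤ} (ha : a ≠ 0) :
    ∃ U : Matrix (Fin (n+1)) (Fin (n+1)) ℤ, IsUnit U.det ∧
      ((U.map (Int.cast : ℤ → ℝ))ᵀ * Q * U.map (Int.cast : ℤ → ℝ)) 0 0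
        ≤ (fun i => (a i : ℝ)) ⬝ᵥ Q *ᵥ (fun i => (a i : ℝ)) := by
  classical
  obtain ⟨b, c, rfl⟩ := (Pi.basisFun ℤ (Fin (n+1))).exists_eq_smul_basis ha 0
  set U := (Pi.basisFun ℤ (Fin (n+1))).toMatrix b
  have := (Pi.basisFun ℤ (Fin (n+1))).invertibleToMatrix b
  refine ⟨U, isUnit_det_of_invertible U, ?_⟩
  -- the corner of the new form is the value at the basis vector `b 0`, and `a = c • b 0`
  set v := U.map (Int.cast : ℤ → ℝ) *ᵥ Pi.single 0 1
  have hcol : (fun i => ((c • b 0) i : ℝ)) = (c : ℝ) • v := by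
    ext i; simp [v, U, Module.Basis.toMatrix_apply]
  have hcorner : ((U.map (Int.cast : ℤ → ℝ))ᵀ * Q * U.map (Int.cast : ℤ → ℝ)) 0 0
      = v ⬝ᵥ Q *ᵥ v := by
    rw [← dotProduct_transpose_mul_mul_mulVec]
    simp
  have hv : 0 ≤ v ⬝ᵥ Q *ᵥ v := by simpa using hQ.dotProduct_mulVec_nonneg v
  have hc : (1 : ℝ) ≤ (c : ℝ) ^ 2 := by
    have : c ≠ 0 := by rintro rfl; simp at ha
    exact_mod_cast (one_le_sq_iff_one_le_abs _).mpr (Int.one_le_abs this)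
  rw [hcorner, hcol, smul_dotProduct, mulVec_smul, dotProduct_smul, smul_eq_mul, smul_eq_mul,
    ← mul_assoc, ← sq]
  nlinarith

end IntegralChangeOfBasis

section SchurComplement

variable {n : ℕ}

noncomputable def Matrix.schurComplement₀₀ (Q : Matrix (Fin (n+1)) (Fin (n+1)) ℝ) :
    Matrix (Fin n) (Fin n) ℝ :=
  Q.submatrix Fin.succ Fin.succ - (Q 0 0)⁻¹ • vecMulVec (vecTail (Qᵀ 0)) (vecTail (Q 0))

lemma det_eq_mul_det_schurComplement₀₀ (Q : Matrix (Fin (n+1)) (Fin (n+1)) ℝ) (hq : Q 0 0 ≠ 0) :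
    Q.det = Q 0 0 * Q.schurComplement₀₀.det := by
  -- adding multiples of row `0` to the other rows clears column `0` below the corner
  set c : Fin (n+1) → ℝ := vecCons 0 fun i => -(Q i.succ 0 / Q 0 0)
  have hA : (Q + vecMulVec c (Q 0)).det = Q.det :=
    det_eq_of_forall_row_eq_smul_add_const c 0 rfl fun i j => rfl
  have hcorner : (Q + vecMulVec c (Q 0)) 0 0 = Q 0 0 := by
    simp only [Matrix.add_apply, vecMulVec_apply, c, cons_val_zero, zero_mul, add_zero]
  have hcol (i : Fin n) : (Q + vecMulVec c (Q 0)) i.succ 0 = 0 := by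
    simp only [Matrix.add_apply, vecMulVec_apply, c, cons_val_succ]
    field_simp
    ring
  have hsub : (Q + vecMulVec c (Q 0)).submatrix Fin.succ Fin.succ = Q.schurComplement₀₀ := by
    ext i j
    simp only [submatrix_apply, Matrix.add_apply, vecMulVec_apply, c, cons_val_succ,
      schurComplement₀₀, Matrix.sub_apply, Matrix.smul_apply, vecTail, Function.comp_apply,
      transpose_apply, smul_eq_mul]
    ring
  rw [← hA, det_succ_column_zero, Fin.sum_univ_succ]
  simp [hcorner, hcol, hsub]

lemma dotProduct_mulVec_eq_sq_add_schurComplement₀₀ {Q : Matrix (Fin (n+1)) (Fin (n+1)) ℝ}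
    (hQ : Q.IsSymm) (hq : Q 0 0 ≠ 0) (x : Fin (n+1) → ℝ) :
    x ⬝ᵥ Q *ᵥ x = Q 0 0 * (x 0 + vecTail (Q 0) ⬝ᵥ vecTail x / Q 0 0) ^ 2
      + vecTail x ⬝ᵥ Q.schurComplement₀₀ *ᵥ vecTail x := by
  have hquad : x ⬝ᵥ Q *ᵥ x = Q 0 0 * x 0 ^ 2 + 2 * x 0 * (vecTail (Q 0) ⬝ᵥ vecTail x)
      + vecTail x ⬝ᵥ Q.submatrix Fin.succ Fin.succ *ᵥ vecTail x := by
    have hcross : ∑ i : Fin n, x i.succ * (Q i.succ 0 * x 0)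
        = x 0 * ∑ i : Fin n, Q 0 i.succ * x i.succ := by
      rw [Finset.mul_sum]
      exact Finset.sum_congr rfl fun i _ => by rw [hQ.apply 0 i.succ]; ring
    simp only [dotProduct, mulVec, Fin.sum_univ_succ, vecTail, Function.comp_apply,
      submatrix_apply, mul_add, Finset.sum_add_distrib, hcross]
    ring
  have hschur : vecTail x ⬝ᵥ Q.schurComplement₀₀ *ᵥ vecTail x
      = vecTail x ⬝ᵥ Q.submatrix Fin.succ Fin.succ *ᵥ vecTail x
        - (Q 0 0)⁻¹ * (vecTail (Q 0) ⬝ᵥ vecTail x) ^ 2 := by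
    rw [schurComplement₀₀, hQ.eq, sub_mulVec, smul_mulVec, vecMulVec_mulVec, dotProduct_sub,
      dotProduct_smul, op_smul_eq_smul, dotProduct_smul,
      dotProduct_comm (vecTail x) (vecTail (Q 0)), smul_eq_mul, smul_eq_mul]
    ring
  rw [hquad, hschur]
  field_simp
  ring

lemma Matrix.PosDef.schurComplement₀₀ {Q : Matrix (Fin (n+1)) (Fin (n+1)) ℝ} (hQ : Q.PosDef) :
    Q.schurComplement₀₀.PosDef := by
  have hsymm : Q.IsSymm := isHermitian_iff_isSymm.mp hQ.isHermitian
  have hq : Q 0 0 ≠ 0 := hQ.diag_pos.ne'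
  refine .of_dotProduct_mulVec_pos ?_ fun t ht => ?_
  · rw [isHermitian_iff_isSymm, Matrix.schurComplement₀₀, hsymm.eq]
    exact (hsymm.submatrix _).sub (IsSymm.smul (transpose_vecMulVec _ _) _)
  · set x : Fin (n+1) → ℝ := vecCons (-(vecTail (Q 0) ⬝ᵥ t) / Q 0 0) t
    have hx : x ≠ 0 := fun h => ht (by simpa [x] using congrArg vecTail h)
    have := hQ.dotProduct_mulVec_pos hx
    rw [star_trivial, dotProduct_mulVec_eq_sq_add_schurComplement₀₀ hsymm hq] at this
    simpa [x, neg_div] using this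

end SchurComplement

section HermiteStep

variable {n : ℕ}

lemma Md_le_apply_zero_zero_div_four_add {Q : Matrix (Fin (n+2)) (Fin (n+2)) ℝ} (hQ : Q.PosDef) :
    Md (n+2) Q ≤ Q 0 0 / 4 + Md (n+1) Q.schurComplement₀₀ := by
  have hsymm : Q.IsSymm := isHermitian_iff_isSymm.mp hQ.isHermitian
  have hq : 0 < Q 0 0 := hQ.diag_pos
  rw [← sub_le_iff_le_add']
  refine le_Md fun b hb => ?_
  set y := -(vecTail (Q 0) ⬝ᵥ fun i => (b i : ℝ)) / Q 0 0
  have hx : (vecCons (round y) b : Fin (n+2) → ℤ) ≠ 0 :=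
    fun h => hb (by simpa using congrArg vecTail h)
  have hround : (round y - y) ^ 2 ≤ 1 / 4 := by
    have := abs_sub_round y
    rw [abs_sub_comm] at this
    nlinarith [abs_le.mp this]
  have htail : vecTail (fun i => ((vecCons (round y) b i : ℤ) : ℝ)) = fun i => (b i : ℝ) := rfl
  have hhead : ((vecCons (round y) b 0 : ℤ) : ℝ) + vecTail (Q 0) ⬝ᵥ (fun i => (b i : ℝ)) / Q 0 0
      = round y - y := by
    simp only [cons_val_zero, y, neg_div, sub_neg_eq_add]
  have := Md_le hQ.posSemidef hx
  rw [dotProduct_mulVec_eq_sq_add_schurComplement₀₀ hsymm hq.ne', htail, hhead] at this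
  nlinarith

lemma pow_mul_Md_le_of_forall_Md_pow_le {K : ℝ} (hK : 0 ≤ K)
    (hR : ∀ R : Matrix (Fin (n+1)) (Fin (n+1)) ℝ, R.PosDef → Md (n+1) R ^ (n+1) ≤ K * R.det)
    {Q : Matrix (Fin (n+2)) (Fin (n+2)) ℝ} (hQ : Q.PosDef) (hm : 0 < Md (n+2) Q) :
    (3 / 4 * Md (n+2) Q) ^ (n+1) * Md (n+2) Q ≤ K * Q.det := by
  set m := Md (n+2) Q
  -- `T` bounds `M_{n+1}` of the Schur complement below whatever `a` is, so it survives the infimum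
  set T := (K * Q.det / m) ^ ((n+1 : ℕ) : ℝ)⁻¹
  have hmT : 4 * (m - T) ≤ m := by
    refine le_Md fun a ha => ?_
    obtain ⟨U, hU, hcorner⟩ := exists_isUnit_det_transpose_mul_mul_apply_zero_le hQ.posSemidef ha
    set Q' := (U.map (Int.cast : ℤ → ℝ))ᵀ * Q * U.map (Int.cast : ℤ → ℝ)
    have hQ' : Q'.PosDef := hQ.transpose_mul_mul_map_intCast hU
    have hm' : Md (n+2) Q' = m := Md_transpose_mul_mul_map_intCast Q hU
    have hmq : m ≤ Q' 0 0 := hm' ▸ Md_le_diag hQ'.posSemidef 0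
    have hdet : Q'.schurComplement₀₀.det = Q.det / Q' 0 0 := by
      have hq : Q' 0 0 ≠ 0 := hQ'.diag_pos.ne'
      rw [← det_transpose_mul_mul_map_intCast Q hU, det_eq_mul_det_schurComplement₀₀ Q' hq,
        mul_div_cancel_left₀ _ hq]
    have hRT : Md (n+1) Q'.schurComplement₀₀ ≤ T := by
      rw [Real.le_rpow_inv_iff_of_pos (Md_nonneg hQ'.schurComplement₀₀.posSemidef)
        (by have := hQ.det_pos; positivity) (by positivity), Real.rpow_natCast]
      calc Md (n+1) Q'.schurComplement₀₀ ^ (n+1) ≤ K * (Q.det / Q' 0 0) :=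
            hdet ▸ hR _ hQ'.schurComplement₀₀
        _ ≤ K * Q.det / m := by
          rw [mul_div_assoc]
          gcongr
          exact hQ.det_pos.le
    have := hm' ▸ Md_le_apply_zero_zero_div_four_add hQ'
    linarith
  calc (3 / 4 * m) ^ (n+1) * m ≤ T ^ (n+1) * m := by gcongr; linarith
    _ = K * Q.det := by
      rw [Real.rpow_inv_natCast_pow (by have := hQ.det_pos; positivity) (by positivity)]
      field_simp

end HermiteStep

theorem Md_pow_le (n : ℕ) (Q : Matrix (Fin (n+1)) (Fin (n+1)) ℝ) (hQ : Q.PosDef) :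
    Md (n+1) Q ^ (n+1) ≤ (4 / 3 : ℝ) ^ (n+1).choose 2 * Q.det := by
  induction n with
  | zero => simpa [det_fin_one] using Md_le_diag hQ.posSemidef 0
  | succ n ih =>
    rcases (Md_nonneg hQ.posSemidef).eq_or_lt with hm | hm
    · rw [← hm, zero_pow (by positivity)]
      exact mul_nonneg (by positivity) hQ.det_pos.le
    have := pow_mul_Md_le_of_forall_Md_pow_le (by positivity) ih hQ hm
    calc Md (n+2) Q ^ (n+2) = (4/3) ^ (n+1) * ((3 / 4 * Md (n+2) Q) ^ (n+1) * Md (n+2) Q) := by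
          rw [mul_pow, ← mul_assoc, ← mul_assoc, ← mul_pow]; norm_num; ring
      _ ≤ (4/3) ^ (n+1) * ((4/3) ^ (n+1).choose 2 * Q.det) := by gcongr
      _ = (4/3) ^ (n+2).choose 2 * Q.det := by
          rw [Nat.choose_succ_succ (n+1) 1, Nat.choose_one_right]; ring

theorem hermite_bound_general (d : ℕ) (Q : Matrix (Fin d) (Fin d) ℝ)
    (hQ : Q.PosDef) :
    Md d Q ≤ ((4 : ℝ) / 3) ^ (((d : ℝ) - 1) / 2) * Q.det ^ ((1 : ℝ) / d) := by
  rcases d with _ | n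
  · rw [Md_zero]
    exact mul_nonneg (by positivity) (Real.rpow_nonneg hQ.det_pos.le _)
  have hrhs : ((4 : ℝ) / 3) ^ ((((n+1 : ℕ) : ℝ) - 1) / 2) * Q.det ^ ((1 : ℝ) / (n+1 : ℕ))
      = ((4 / 3 : ℝ) ^ (n+1).choose 2 * Q.det) ^ ((n+1 : ℕ) : ℝ)⁻¹ := by
    rw [Real.mul_rpow (by positivity) hQ.det_pos.le, ← Real.rpow_natCast,
      ← Real.rpow_mul (by norm_num), Nat.cast_choose_two, one_div]
    congr 2
    push_cast
    field_simp
  rw [hrhs, Real.le_rpow_inv_iff_of_pos (Md_nonneg hQ.posSemidef)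
    (mul_nonneg (by positivity) hQ.det_pos.le) (by positivity), Real.rpow_natCast]
  exact Md_pow_le n Q hQ

/-- Hermite's inequality: for a positive definite `d × d` matrix `Q` (`d ≥ 2`),
`M_d(Q) ≤ (4/3)^((d-1)/2) · (det Q)^(1/d)`. -/
theorem hermite_bound (d : ℕ) (hd : 2 ≤ d) (Q : Matrix (Fin d) (Fin d) ℝ)
    (hQ : Q.PosDef) :
    Md d Q ≤ ((4 : ℝ) / 3) ^ (((d : ℝ) - 1) / 2) * Q.det ^ ((1 : ℝ) / d) :=
  hermite_bound_general d Q hQ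
end

section
/- The Jacobian determinant of the Cholesky map φ: L ↦ Lᵀ L from upper triangular matrices with positive diagonal (identified with ℝ^{d(d+1)/2}) to symmetric positive definite matrices (identified with ℝ^{d(d+1)/2} via the upper triangular part) at a point L with diagonal entries l₁₁,...,l_{dd} equals 2^d · Π_{i=1}^d l_{ii}^{d−i+1}. -/
open Matrix

/-- The upper-triangular coordinates `ℝ^{d(d+1)/2}` of matrices. -/
abbrev UpperIdx (d : ℕ) := {p : Fin d × Fin d // p.1 ≤ p.2}

/-- The upper triangular matrix with given upper coordinates. -/
noncomputable def toUpperMat (d : ℕ) (x : UpperIdx d → ℝ) :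
    Matrix (Fin d) (Fin d) ℝ :=
  Matrix.of fun i j => if h : i ≤ j then x ⟨(i, j), h⟩ else 0

/-- The Cholesky map `L ↦ Lᵀ L` read in upper-triangular coordinates on both
sides (a symmetric matrix being recorded by its upper triangular part). -/
noncomputable def cholCoord (d : ℕ) (x : UpperIdx d → ℝ) : UpperIdx d → ℝ :=
  fun p => ((toUpperMat d x)ᵀ * toUpperMat d x) p.1.1 p.1.2

/-! The differential of `U ↦ UᵀU` at an upper triangular `U` is `H ↦ UᵀH + HᵀU`. In the
coordinates `(i, j)`, `i ≤ j`, its entry at row `(i, j)` and column `(k, l)` is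
`U k i * [j = l] + U k j * [i = l]`, which vanishes when `(i, j)` precedes `(k, l)`
lexicographically since `U` is upper triangular. So the Jacobian matrix is triangular; its
diagonal entry is `2 * U i i` at `(i, i)` and `U i i` at `(i, j)` with `i < j`, and row `i`
of `U` contributes `2 * U i i ^ (d - i)`. -/

open Finset

theorem Matrix.det_of_lowerTriangular_wrt {ι α R : Type*} [CommRing R]
    [Fintype ι] [DecidableEq ι] [LinearOrder α] (M : Matrix ι ι R) {f : ι → α}
    (hf : Function.Injective f) (h : ∀ i j, f i < f j → M i j = 0) :
    M.det = ∏ i, M i i :=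
  letI : LinearOrder ι := LinearOrder.lift' f hf
  det_of_isLowerTriangular M fun i j hij => h i j hij

namespace Cholesky

variable {d : ℕ}

theorem prod_upperIdx {M : Type*} [CommMonoid M] (g : Fin d → Fin d → M) :
    ∏ p : UpperIdx d, g p.1.1 p.1.2 = ∏ i, ∏ j ∈ Ici i, g i j := by
  rw [← prod_subtype (univ.filter fun p : Fin d × Fin d => p.1 ≤ p.2) (by simp)
    (fun p => g p.1 p.2), prod_filter, Fintype.prod_prod_type]
  refine prod_congr rfl fun i _ => ?_
  rw [← prod_filter]
  congr 1
  ext j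
  simp

lemma toUpperMat_apply_of_lt (x : UpperIdx d → ℝ) {i j : Fin d} (h : j < i) :
    toUpperMat d x i j = 0 := by
  simp [toUpperMat, not_le.2 h]

lemma toUpperMat_single (q : UpperIdx d) :
    toUpperMat d (Pi.single q 1) = Matrix.single q.1.1 q.1.2 1 := by
  ext i j
  by_cases h : i ≤ j
  · simp [toUpperMat, h, Pi.single_apply, Matrix.single_apply, Subtype.ext_iff, Prod.ext_iff,
      eq_comm]
  · have : ¬ (q.1.1 = i ∧ q.1.2 = j) := fun ⟨h1, h2⟩ => h (h1 ▸ h2 ▸ q.2)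
    simp [toUpperMat, h, this]

variable (d) in
noncomputable def upperEntry (i j : Fin d) : (UpperIdx d → ℝ) →L[ℝ] ℝ :=
  if h : i ≤ j then ContinuousLinearMap.proj (⟨(i, j), h⟩ : UpperIdx d) else 0

lemma upperEntry_apply (i j : Fin d) (x : UpperIdx d → ℝ) :
    upperEntry d i j x = toUpperMat d x i j := by
  unfold upperEntry toUpperMat
  split_ifs with h <;> simp [h]

variable (d) in
noncomputable def cholCoordDeriv (x : UpperIdx d → ℝ) :
    (UpperIdx d → ℝ) →L[ℝ] (UpperIdx d → ℝ) :=
  ContinuousLinearMap.pi fun p => ∑ k,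
    (upperEntry d k p.1.1 x • upperEntry d k p.1.2 + upperEntry d k p.1.2 x • upperEntry d k p.1.1)

lemma cholCoordDeriv_apply (x h : UpperIdx d → ℝ) (p : UpperIdx d) :
    cholCoordDeriv d x h p =
      ((toUpperMat d x)ᵀ * toUpperMat d h + (toUpperMat d h)ᵀ * toUpperMat d x) p.1.1 p.1.2 := by
  simp [cholCoordDeriv, upperEntry_apply, Matrix.mul_apply, sum_add_distrib, mul_comm]

lemma hasFDerivAt_cholCoord (x : UpperIdx d → ℝ) :
    HasFDerivAt (cholCoord d) (cholCoordDeriv d x) x := by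
  refine hasFDerivAt_pi'.2 fun p => ?_
  have hcoord : (fun y => cholCoord d y p)
      = fun y => ∑ k, upperEntry d k p.1.1 y * upperEntry d k p.1.2 y := by
    ext y
    simp [cholCoord, Matrix.mul_apply, upperEntry_apply]
  rw [hcoord, cholCoordDeriv, ContinuousLinearMap.proj_pi]
  exact HasFDerivAt.fun_sum fun k _ =>
    (upperEntry d k p.1.1).hasFDerivAt.mul (upperEntry d k p.1.2).hasFDerivAt

lemma toMatrix'_cholCoordDeriv (x : UpperIdx d → ℝ) (p q : UpperIdx d) :
    LinearMap.toMatrix' (cholCoordDeriv d x : (UpperIdx d → ℝ) →ₗ[ℝ] _) p q =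
      (if p.1.2 = q.1.2 then toUpperMat d x q.1.1 p.1.1 else 0) +
        (if p.1.1 = q.1.2 then toUpperMat d x q.1.1 p.1.2 else 0) := by
  rw [LinearMap.toMatrix'_apply, ContinuousLinearMap.coe_coe, cholCoordDeriv_apply,
    toUpperMat_single, transpose_single, Matrix.add_apply]
  congr 1 <;> split_ifs with h <;> simp [h]

lemma toMatrix'_cholCoordDeriv_of_lt (x : UpperIdx d → ℝ) {p q : UpperIdx d}
    (hpq : toLex p.1 < toLex q.1) :
    LinearMap.toMatrix' (cholCoordDeriv d x : (UpperIdx d → ℝ) →ₗ[ℝ] _) p q = 0 := by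
  have hp := p.2
  have hq := q.2
  rw [Prod.Lex.toLex_lt_toLex] at hpq
  rw [toMatrix'_cholCoordDeriv]
  split_ifs with h₂ h₁ h₁
  · exfalso; grind
  · rw [toUpperMat_apply_of_lt x (by grind), add_zero]
  · exfalso; grind
  · rw [add_zero]

lemma toMatrix'_cholCoordDeriv_self (x : UpperIdx d → ℝ) (p : UpperIdx d) :
    LinearMap.toMatrix' (cholCoordDeriv d x : (UpperIdx d → ℝ) →ₗ[ℝ] _) p p =
      (if p.1.1 = p.1.2 then 2 else 1) * toUpperMat d x p.1.1 p.1.1 := by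
  rw [toMatrix'_cholCoordDeriv, if_pos rfl]
  split_ifs with h
  · rw [h]; ring
  · rw [add_zero, one_mul]

theorem det_fderiv_cholCoord (x : UpperIdx d → ℝ) :
    LinearMap.det (fderiv ℝ (cholCoord d) x : (UpperIdx d → ℝ) →ₗ[ℝ] (UpperIdx d → ℝ)) =
      2 ^ d * ∏ i : Fin d, toUpperMat d x i i ^ (d - i.val) := by
  rw [(hasFDerivAt_cholCoord x).fderiv, ← LinearMap.det_toMatrix',
    det_of_lowerTriangular_wrt _ (toLex.injective.comp Subtype.val_injective)
      fun _ _ => toMatrix'_cholCoordDeriv_of_lt x]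
  simp only [toMatrix'_cholCoordDeriv_self]
  rw [prod_upperIdx (fun i j => (if i = j then (2 : ℝ) else 1) * toUpperMat d x i i)]
  calc ∏ i, ∏ j ∈ Ici i, (if i = j then (2 : ℝ) else 1) * toUpperMat d x i i
      = ∏ i : Fin d, 2 * toUpperMat d x i i ^ (d - i.val) := by
        refine prod_congr rfl fun i _ => ?_
        rw [prod_mul_distrib, prod_ite_eq, if_pos (mem_Ici.2 le_rfl), prod_const, Fin.card_Ici]
    _ = _ := by rw [prod_mul_distrib, prod_const, card_univ, Fintype.card_fin]

end Cholesky

theorem cholesky_jacobian_general (d : ℕ) (L : Matrix (Fin d) (Fin d) ℝ) :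
    LinearMap.det
        ((fderiv ℝ (cholCoord d) (fun p : UpperIdx d => L p.1.1 p.1.2)) :
          (UpperIdx d → ℝ) →ₗ[ℝ] (UpperIdx d → ℝ))
      = 2 ^ d * ∏ i : Fin d, L i i ^ (d - i.val) := by
  rw [Cholesky.det_fderiv_cholCoord]
  simp [toUpperMat]

/-- The Jacobian determinant of the Cholesky map at an upper triangular matrix
`L` with positive diagonal entries `l₁₁, …, l_dd` equals
`2^d · ∏ᵢ l_{ii}^{d-i+1}` (with `i` running from `1` to `d`). -/
theorem cholesky_jacobian (d : ℕ) (L : Matrix (Fin d) (Fin d) ℝ)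
    (hupper : ∀ i j, j < i → L i j = 0) (hdiag : ∀ i, 0 < L i i) :
    LinearMap.det
        ((fderiv ℝ (cholCoord d) (fun p : UpperIdx d => L p.1.1 p.1.2)) :
          (UpperIdx d → ℝ) →ₗ[ℝ] (UpperIdx d → ℝ))
      = 2 ^ d * ∏ i : Fin d, L i i ^ (d - i.val) :=
  cholesky_jacobian_general d L
end

section
/- Let d ≥ 1, γ > 0 and c₀ > γ^d. If T is an upper triangular d×d real matrix with det(γ I_d + Tᵀ T) = c₀, and t denotes the vector of entries of T in ℝ^{d(d+1)/2}, then c₀^{1/d} − γ ≤ ‖t‖₂² ≤ (c₀ − γ^d)/γ^{d−1}. In particular T ≠ 0. -/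
/-!
Let `μᵢ ≥ 0` be the eigenvalues of `TᵀT`. Then `det(γ I + TᵀT) = ∏ (γ + μᵢ)` and, since `T` is upper
triangular, `‖t‖₂² = tr(TᵀT) = ∑ μᵢ`. Expanding the product and keeping only the constant and
linear terms gives `γ^d + γ^(d-1) ∑ μᵢ ≤ c₀`; bounding every factor by `γ + ∑ μᵢ` gives
`c₀ ≤ (γ + ∑ μᵢ)^d`.
-/

open Matrix Finset

theorem Finset.pow_add_pow_pred_mul_sum_le_prod_add {ι : Type*} {s : Finset ι}
    {γ : ℝ} {f : ι → ℝ} (hγ : 0 ≤ γ) (hf : ∀ i ∈ s, 0 ≤ f i) :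
    γ ^ #s + γ ^ (#s - 1) * ∑ i ∈ s, f i ≤ ∏ i ∈ s, (γ + f i) := by
  classical
  induction s using Finset.induction_on with
  | empty => simp
  | @insert a t hat ih =>
    rw [prod_insert hat, sum_insert hat, card_insert_of_notMem hat, Nat.add_sub_cancel]
    have hfa : 0 ≤ f a := hf a (mem_insert_self a t)
    have hft : ∀ i ∈ t, 0 ≤ f i := fun i hi => hf i (mem_insert_of_mem hi)
    have hsum : 0 ≤ ∑ i ∈ t, f i := sum_nonneg hft
    have hshift : γ * (γ ^ (#t - 1) * ∑ i ∈ t, f i) = γ ^ #t * ∑ i ∈ t, f i := by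
      rcases t.eq_empty_or_nonempty with rfl | hne
      · simp
      · rw [← mul_assoc, ← pow_succ', Nat.sub_add_cancel hne.card_pos]
    calc γ ^ (#t + 1) + γ ^ #t * (f a + ∑ i ∈ t, f i)
        ≤ (γ + f a) * (γ ^ #t + γ ^ (#t - 1) * ∑ i ∈ t, f i) := by
          have := mul_nonneg hfa (mul_nonneg (pow_nonneg hγ (#t - 1)) hsum)
          rw [pow_succ]; nlinarith
      _ ≤ (γ + f a) * ∏ i ∈ t, (γ + f i) := mul_le_mul_of_nonneg_left (ih hft) (by linarith)

theorem Finset.prod_add_le_pow_add_sum {ι : Type*} {s : Finset ι}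
    {γ : ℝ} {f : ι → ℝ} (hγ : 0 ≤ γ) (hf : ∀ i ∈ s, 0 ≤ f i) :
    ∏ i ∈ s, (γ + f i) ≤ (γ + ∑ i ∈ s, f i) ^ #s := by
  rw [← prod_const]
  exact prod_le_prod (fun i hi => add_nonneg hγ (hf i hi))
    fun i hi => by gcongr; exact single_le_sum hf hi

theorem Matrix.IsHermitian.det_smul_one_add {𝕜 n : Type*} [RCLike 𝕜] [Fintype n] [DecidableEq n]
    {A : Matrix n n 𝕜} (hA : A.IsHermitian) (γ : 𝕜) :
    (γ • 1 + A).det = ∏ i, (γ + hA.eigenvalues i) := by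
  have h := congrArg (Polynomial.eval (-γ)) hA.charpoly_eq
  rw [eval_charpoly, Polynomial.eval_prod] at h
  simp only [Polynomial.eval_sub, Polynomial.eval_X, Polynomial.eval_C] at h
  have hneg : scalar n (-γ) - A = -(γ • 1 + A) := by
    rw [scalar_apply, ← smul_one_eq_diagonal, neg_smul, neg_add', sub_eq_add_neg]
  rw [hneg, det_neg] at h
  simp_rw [← neg_add', Finset.prod_neg, card_univ] at h
  exact mul_left_cancel₀ (pow_ne_zero _ (neg_ne_zero.2 one_ne_zero)) h

namespace Matrix.PosSemidef

variable {n : Type*} [Fintype n] [DecidableEq n] {M : Matrix n n ℝ} {γ : ℝ}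

theorem pow_add_pow_pred_mul_trace_le_det_smul_one_add (hM : M.PosSemidef) (hγ : 0 ≤ γ) :
    γ ^ Fintype.card n + γ ^ (Fintype.card n - 1) * M.trace ≤ (γ • 1 + M).det := by
  rw [hM.isHermitian.det_smul_one_add, hM.isHermitian.trace_eq_sum_eigenvalues, ← card_univ]
  exact pow_add_pow_pred_mul_sum_le_prod_add hγ fun i _ => hM.eigenvalues_nonneg i

theorem det_smul_one_add_le_pow (hM : M.PosSemidef) (hγ : 0 ≤ γ) :
    (γ • 1 + M).det ≤ (γ + M.trace) ^ Fintype.card n := by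
  rw [hM.isHermitian.det_smul_one_add, hM.isHermitian.trace_eq_sum_eigenvalues, ← card_univ]
  exact prod_add_le_pow_add_sum hγ fun i _ => hM.eigenvalues_nonneg i

end Matrix.PosSemidef

theorem Matrix.trace_transpose_mul_self {m n : Type*} [Fintype m] [Fintype n] (A : Matrix m n ℝ) :
    (Aᵀ * A).trace = ∑ i, ∑ j, A i j ^ 2 := by
  rw [trace, sum_comm]
  simp [mul_apply, sq]

theorem sum_subtype_le_eq_sum_of_lower_eq_zero {ι M : Type*} [Fintype ι] [LinearOrder ι]
    [AddCommMonoid M] {f : ι → ι → M} (hf : ∀ i j, j < i → f i j = 0) :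
    ∑ p : {p : ι × ι // p.1 ≤ p.2}, f p.1.1 p.1.2 = ∑ i, ∑ j, f i j := by
  rw [← subtype_univ, sum_subtype_eq_sum_filter (f := fun p : ι × ι => f p.1 p.2),
    sum_filter_of_ne, Fintype.sum_prod_type]
  intro p _ hp
  exact not_lt.1 fun h => hp (hf _ _ h)

theorem entries_norm_bounds_general (d : ℕ) (γ c₀ : ℝ) (hγ : 0 < γ)
    (hc : γ ^ d < c₀) (T : Matrix (Fin d) (Fin d) ℝ)
    (hupper : ∀ i j, j < i → T i j = 0)
    (hdet : (γ • (1 : Matrix (Fin d) (Fin d) ℝ) + Tᵀ * T).det = c₀) :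
    c₀ ^ ((1 : ℝ) / d) - γ ≤
        (∑ p : {p : Fin d × Fin d // p.1 ≤ p.2}, (T p.1.1 p.1.2) ^ 2) ∧
      (∑ p : {p : Fin d × Fin d // p.1 ≤ p.2}, (T p.1.1 p.1.2) ^ 2)
        ≤ (c₀ - γ ^ d) / γ ^ (d - 1) ∧
      T ≠ 0 := by
  have hT : T ≠ 0 := by
    rintro rfl
    simp at hdet
    linarith
  -- the `d`-th root below needs `d ≠ 0`, since `1 / 0 = 0` in `ℝ`
  have hd : d ≠ 0 := by
    rintro rfl
    exact hT (Subsingleton.elim _ _)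
  have hM : (Tᵀ * T).PosSemidef := by
    simpa only [conjTranspose_eq_transpose_of_trivial] using posSemidef_conjTranspose_mul_self T
  rw [sum_subtype_le_eq_sum_of_lower_eq_zero (f := fun i j => T i j ^ 2)
    fun i j h => by simp [hupper i j h], ← trace_transpose_mul_self]
  have hlow := hM.pow_add_pow_pred_mul_trace_le_det_smul_one_add hγ.le
  have hup := hM.det_smul_one_add_le_pow hγ.le
  rw [hdet, Fintype.card_fin] at hlow hup
  refine ⟨?_, ?_, hT⟩
  · have hc₀ : 0 ≤ c₀ := by linarith [pow_pos hγ d]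
    rwa [sub_le_iff_le_add', one_div, Real.rpow_inv_le_iff_of_pos hc₀
      (by linarith [hM.trace_nonneg]) (by positivity), Real.rpow_natCast]
  · rw [le_div_iff₀ (pow_pos hγ _)]
    linarith

/-- Norm bounds on the manifold `det(γ I + Tᵀ T) = c₀`: if `γ > 0`,
`c₀ > γ^d` and `T` is upper triangular with `det(γ I_d + Tᵀ T) = c₀`, then the
vector `t ∈ ℝ^{d(d+1)/2}` of entries of `T` satisfies
`c₀^{1/d} − γ ≤ ‖t‖₂² ≤ (c₀ − γ^d)/γ^{d−1}`; in particular `T ≠ 0`. -/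
theorem entries_norm_bounds (d : ℕ) (hd : 1 ≤ d) (γ c₀ : ℝ) (hγ : 0 < γ)
    (hc : γ ^ d < c₀) (T : Matrix (Fin d) (Fin d) ℝ)
    (hupper : ∀ i j, j < i → T i j = 0)
    (hdet : (γ • (1 : Matrix (Fin d) (Fin d) ℝ) + Tᵀ * T).det = c₀) :
    c₀ ^ ((1 : ℝ) / d) - γ ≤
        (∑ p : {p : Fin d × Fin d // p.1 ≤ p.2}, (T p.1.1 p.1.2) ^ 2) ∧
      (∑ p : {p : Fin d × Fin d // p.1 ≤ p.2}, (T p.1.1 p.1.2) ^ 2)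
        ≤ (c₀ - γ ^ d) / γ ^ (d - 1) ∧
      T ≠ 0 :=
  entries_norm_bounds_general d γ c₀ hγ hc T hupper hdet
end
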